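/- The exponential Riordan array [1/(1+r(1-e^z)), (e^z-1)/(1+r(1-e^z))] has A-sequence generating function A(z) = (1+rz)(1+(r+1)z) and Z-sequence generating function Z(z) = r(1+(r+1)z); consequently its production matrix is tridiagonal, and the moment sequence with EGF 1/(1+r(1-e^z)) is the moment sequence of the orthogonal polynomials P_n(x;r) satisfying P_n = (x - (r + (n-1)(2r+1)))P_{n-1} - r(r+1)(n-1)²P_{n-2}, P_0 = 1, P_1 = x - r. -/

import Mathlib

open PowerSeries Finset

noncomputable section

/-- The field ℚ(r) of rational functions, in which the parameter r lives. -/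
abbrev K : Type := RatFunc ℚ

instance : CharZero K := RingHom.charZero_iff (algebraMap ℚ K).injective |>.mp inferInstance

/-- The parameter r. -/
def r : K := RatFunc.X

/-- Composition f(g) of formal power series (intended for g with zero constant term). -/
def pcomp (f g : K⟦X⟧) : K⟦X⟧ :=
  PowerSeries.mk fun n => ∑ k ∈ Finset.range (n + 1), coeff k f * coeff n (g ^ k)

/-- g(z) = 1/(1 + r(1 - e^z)), the first component of the exponential Riordan array. -/
def gR : K⟦X⟧ := (1 + C r * (1 - exp K))⁻¹

/-- f(z) = (e^z - 1)/(1 + r(1 - e^z)), the second component. -/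
def fR : K⟦X⟧ := (exp K - 1) * (1 + C r * (1 - exp K))⁻¹

/-!
Write `D = 1 + r(1 - e^z)`, so that `g = 1/D` and `f = (e^z - 1)/D`. Clearing `D` gives
`g = 1 + r f` and `1 + (r + 1) f = e^z/D`, while the quotient rule gives `f' = e^z/D²`; hence
`f' = (1 + r f)(1 + (r + 1) f)` and `g' = r f'`. Substituting `f̄` is a ring homomorphism
sending `f` to `z`, which turns these identities into the stated `A(z)` and `Z(z)`.
-/

theorem PowerSeries.coeff_pow_eq_zero_of_lt {R : Type*} [CommSemiring R] {g : R⟦X⟧}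
    (hg : constantCoeff g = 0) {k n : ℕ} (h : n < k) : coeff n (g ^ k) = 0 :=
  coeff_of_lt_order n <| (Nat.cast_lt.mpr h).trans_le (le_order_pow_of_constantCoeff_eq_zero k hg)

theorem pcomp_eq_subst (f : K⟦X⟧) {g : K⟦X⟧} (hg : constantCoeff g = 0) :
    pcomp f g = f.subst g := by
  ext n
  rw [pcomp, coeff_mk, coeff_subst' (.of_constantCoeff_zero' hg),
    finsum_eq_sum_of_support_subset _ (s := Finset.range (n + 1)) fun k hk => ?_]
  · simp only [smul_eq_mul]
  · by_contra hkn
    simp only [Finset.coe_range, Set.mem_Iio, not_lt] at hkn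
    exact hk (by simp only [coeff_pow_eq_zero_of_lt hg (by omega : n < k), smul_zero])

local notation "𝒟" => (1 + C r * (1 - exp K) : K⟦X⟧)

theorem mul_inv_riordanDenom : 𝒟 * 𝒟⁻¹ = 1 :=
  PowerSeries.mul_inv_cancel _ (by simp)

theorem gR_eq_one_add_C_mul_fR : gR = 1 + C r * fR := by
  unfold gR fR
  linear_combination mul_inv_riordanDenom

theorem derivative_fR : d⁄dX K fR = (1 + C r * fR) * (1 + C (r + 1) * fR) := by
  unfold fR
  simp only [Derivation.leibniz, derivative_inv', map_add, map_sub, map_one, derivative_exp,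
    derivative_C, Derivation.map_one_eq_zero, smul_eq_mul]
  linear_combination (1 + C r * (exp K - 1) * 𝒟⁻¹) * mul_inv_riordanDenom

theorem derivative_gR : d⁄dX K gR = C r * d⁄dX K fR := by
  simp [gR_eq_one_add_C_mul_fR]

/-- For the exponential Riordan array [1/(1+r(1-e^z)), (e^z-1)/(1+r(1-e^z))], with f̄ the
compositional inverse of f: the A-sequence generating function A(z) = f'(f̄(z)) equals
(1+rz)(1+(r+1)z), and the Z-sequence generating function Z(z) = g'(f̄(z))/g(f̄(z)) equals
r(1+(r+1)z); hence the production matrix is tridiagonal with the stated orthogonal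
polynomial recurrence data. -/
theorem riordan_AZ_sequences (fbar : K⟦X⟧)
    (h0 : constantCoeff fbar = 0)
    (hinv : pcomp fR fbar = X) :
    pcomp (derivativeFun fR) fbar = (1 + C r * X) * (1 + C (r + 1) * X) ∧
      pcomp (derivativeFun gR) fbar * (pcomp gR fbar)⁻¹ = C r * (1 + C (r + 1) * X) := by
  set φ := substAlgHom (R := K) (HasSubst.of_constantCoeff_zero' h0)
  have pcomp_eq (f : K⟦X⟧) : pcomp f fbar = φ f := by rw [pcomp_eq_subst f h0, coe_substAlgHom]
  have φ_C (c : K) : φ (C c) = C c := φ.commutes c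
  have φ_linear (c : K) : φ (1 + C c * fR) = 1 + C c * X := by
    rw [map_add, map_one, map_mul, φ_C, ← pcomp_eq, hinv]
  have hA : φ (d⁄dX K fR) = (1 + C r * X) * (1 + C (r + 1) * X) := by
    rw [derivative_fR, map_mul, φ_linear, φ_linear]
  simp only [pcomp_eq]
  refine ⟨hA, ?_⟩
  change φ (d⁄dX K gR) * (φ gR)⁻¹ = _
  rw [derivative_gR, map_mul, φ_C, hA, gR_eq_one_add_C_mul_fR, φ_linear]
  have hunit : (1 + C r * X) * (1 + C r * X)⁻¹ = 1 := PowerSeries.mul_inv_cancel _ (by simp)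
  linear_combination (C r * (1 + C (r + 1) * X)) * hunit

end
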